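/- For a connected graph G of order n ≥ 3, the graph D_{Γ_t(G)}^t(G) is disconnected if and only if G has at least two minimal total dominating sets. -/
import Mathlib


open Finset

variable {V : Type*} [Fintype V] [DecidableEq V]

def IsTDS (G : SimpleGraph V) (S : Finset V) : Prop :=
  ∀ v : V, ∃ s ∈ S, G.Adj v s

def IsMTDS (G : SimpleGraph V) (S : Finset V) : Prop :=
  IsTDS G S ∧ ∀ T : Finset V, T ⊂ S → ¬ IsTDS G T

/-- The `k`-total dominating graph: vertices are total dominating sets of size at most `k`,
adjacent iff they differ by adding or deleting one vertex. -/
def TDGraph (G : SimpleGraph V) (k : ℕ) :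
    SimpleGraph {S : Finset V // IsTDS G S ∧ S.card ≤ k} :=
  SimpleGraph.fromRel (fun A B => A.1 ⊆ B.1 ∧ B.1.card = A.1.card + 1)

/-- The upper total domination number. -/
noncomputable def GammaT (G : SimpleGraph V) : ℕ :=
  sSup {k | ∃ S : Finset V, IsMTDS G S ∧ S.card = k}

lemma exists_mtds_subset (G : SimpleGraph V) :
    ∀ S : Finset V, IsTDS G S → ∃ M, M ⊆ S ∧ IsMTDS G M := by
  intro S
  induction S using Finset.strongInductionOn with
  | _ S ih =>
    intro hS
    by_cases h : ∀ T : Finset V, T ⊂ S → ¬ IsTDS G T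
    · exact ⟨S, Finset.Subset.refl S, hS, h⟩
    · push_neg at h
      obtain ⟨T, hTS, hT⟩ := h
      obtain ⟨M, hMT, hM⟩ := ih T hTS hT
      exact ⟨M, hMT.trans hTS.subset, hM⟩

lemma univ_tds (G : SimpleGraph V) (hG : G.Connected) (hn : 3 ≤ Fintype.card V) :
    IsTDS G Finset.univ := by
  intro v
  obtain ⟨w, hw⟩ := Fintype.exists_ne_of_one_lt_card (by omega) v
  obtain ⟨p⟩ := hG v w
  cases p with
  | nil => exact absurd rfl hw
  | cons h q => exact ⟨_, Finset.mem_univ _, h⟩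

theorem stmt_8 (G : SimpleGraph V) (hG : G.Connected) (hn : 3 ≤ Fintype.card V) :
    ¬ (TDGraph G (GammaT G)).Connected ↔
      ∃ S T : Finset V, IsMTDS G S ∧ IsMTDS G T ∧ S ≠ T := by
  have hbdd : BddAbove {k | ∃ S : Finset V, IsMTDS G S ∧ S.card = k} := by
    refine ⟨Fintype.card V, ?_⟩
    rintro k ⟨S, -, rfl⟩
    exact Finset.card_le_univ S
  obtain ⟨M0, -, hM0⟩ := exists_mtds_subset G Finset.univ (univ_tds G hG hn)
  have hne : {k | ∃ S : Finset V, IsMTDS G S ∧ S.card = k}.Nonempty :=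
    ⟨M0.card, M0, hM0, rfl⟩
  obtain ⟨Mx, hMx, hMxcard'⟩ := Nat.sSup_mem hne hbdd
  have hMxcard : Mx.card = GammaT G := hMxcard'
  have hle : ∀ S : Finset V, IsMTDS G S → S.card ≤ GammaT G :=
    fun S hS => le_csSup hbdd ⟨S, hS, rfl⟩
  set mx : {S : Finset V // IsTDS G S ∧ S.card ≤ GammaT G} :=
    ⟨Mx, hMx.1, hMxcard.le⟩ with hmx
  have hiso : ∀ B, ¬ (TDGraph G (GammaT G)).Adj mx B := by
    intro B hadj
    rw [TDGraph, SimpleGraph.fromRel_adj] at hadj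
    obtain ⟨hne', h | h⟩ := hadj
    · have h1 : B.1.card ≤ GammaT G := B.2.2
      have h2 : B.1.card = Mx.card + 1 := h.2
      omega
    · have hss : B.1 ⊂ Mx := by
        refine h.1.ssubset_of_ne ?_
        intro he
        rw [he] at h
        omega
      exact hMx.2 B.1 hss B.2.1
  constructor
  · intro hdisc
    by_contra hcon
    push_neg at hcon
    apply hdisc
    rw [SimpleGraph.connected_iff]
    constructor
    · intro x y
      have key : ∀ z : {S : Finset V // IsTDS G S ∧ S.card ≤ GammaT G},
          z = mx := by
        intro z
        obtain ⟨M, hMsub, hM⟩ := exists_mtds_subset G z.1 z.2.1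
        have hMeq : M = Mx := hcon M Mx hM hMx
        have hsub : Mx ⊆ z.1 := by rw [← hMeq]; exact hMsub
        have hcard : z.1.card ≤ Mx.card := by rw [hMxcard]; exact z.2.2
        have : Mx = z.1 := Finset.eq_of_subset_of_card_le hsub hcard
        exact Subtype.ext this.symm
      rw [key x, key y]
    · exact ⟨mx⟩
  · rintro ⟨S, T, hS, hT, hST⟩ hcon
    set s : {S : Finset V // IsTDS G S ∧ S.card ≤ GammaT G} :=
      ⟨S, hS.1, hle S hS⟩ with hs
    set t : {S : Finset V // IsTDS G S ∧ S.card ≤ GammaT G} :=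
      ⟨T, hT.1, hle T hT⟩ with ht
    have hst : s ≠ t := fun he => hST (congrArg Subtype.val he)
    obtain ⟨v, hv⟩ : ∃ v, v ≠ mx := by
      by_cases h : s = mx
      · exact ⟨t, fun he => hst (h.trans he.symm)⟩
      · exact ⟨s, h⟩
    obtain ⟨p⟩ := hcon.preconnected mx v
    cases p with
    | nil => exact hv rfl
    | cons h q => exact hiso _ h
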